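/- arXiv:1905.06618 — 3 statements merged into one kernel-verified Lean document; each statement's English description precedes it below -/
import Mathlib

section
/- (Theorem 1) Let f₁, …, f_k : Finset V → ℝ be nonnegative monotone submodular with f_i(∅)=0, f = ∑ i f_i, and H : ℝ → ℝ nonnegative nondecreasing concave with H(0)=0. If Ŝ is the output of the greedy algorithm with budget B maximizing g(S) = ∑ i H(f_i(S)), and S* is an optimal solution of max_{|S| ≤ B} f(S), then g(Ŝ) ≥ (1 - 1/e) · H(f(S*)). -/
/-!
Composing with a nondecreasing concave `H` and summing preserves monotonicity and submodularity,
so `g S = ∑ i, H (f i S)` is monotone submodular. For such a `g`, a budget-`B` set `S` and a greedy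
step from `T` with gain `Δ`, submodularity gives `g S - g T ≤ g (T ∪ S) - g T ≤ #S * Δ ≤ B * Δ`;
thus each greedy step shrinks the gap `g S - g T` by a factor `1 - 1/B`, and after `B` steps
`(1 - 1/B)^B ≤ e⁻¹` leaves `g Ŝ ≥ (1 - e⁻¹) g S`. Finally `H (∑ i, f i S) ≤ g S` because a
concave `H` with `H 0 = 0` is subadditive on `[0, ∞)`.
-/

open Finset

section Concave

variable {𝕜 : Type*} [Field 𝕜] [LinearOrder 𝕜] [IsStrictOrderedRing 𝕜] {s : Set 𝕜} {H : 𝕜 → 𝕜}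

theorem ConcaveOn.map_add_sub_map_le (hH : ConcaveOn 𝕜 s H) {x y d : 𝕜} (hx : x ∈ s)
    (hyd : y + d ∈ s) (hxy : x ≤ y) (hd : 0 ≤ d) :
    H (y + d) - H y ≤ H (x + d) - H x := by
  rcases (add_le_add hxy hd).eq_or_lt with h | h
  · obtain rfl : d = 0 := by linarith
    obtain rfl : y = x := by linarith
    simp
  -- `x + d` and `y` are the convex combinations of `x` and `y + d` with swapped weights
  have hL : y + d - x ≠ 0 := by linarith
  have ha : 0 ≤ (y - x) / (y + d - x) := div_nonneg (by linarith) (by linarith)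
  have hb : 0 ≤ d / (y + d - x) := div_nonneg hd (by linarith)
  have hab : (y - x) / (y + d - x) + d / (y + d - x) = 1 := by field_simp; ring
  have h₁ := hH.2 hx hyd ha hb hab
  have h₂ := hH.2 hx hyd hb ha (by rwa [add_comm])
  simp only [smul_eq_mul] at h₁ h₂
  rw [show (y - x) / (y + d - x) * x + d / (y + d - x) * (y + d) = x + d by field_simp; ring] at h₁
  rw [show d / (y + d - x) * x + (y - x) / (y + d - x) * (y + d) = y by field_simp; ring] at h₂
  linear_combination h₁ + h₂ - (H x + H (y + d)) * hab

theorem ConcaveOn.map_add_le (hH : ConcaveOn 𝕜 (Set.Ici 0) H) (hH0 : 0 ≤ H 0) {x y : 𝕜}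
    (hx : 0 ≤ x) (hy : 0 ≤ y) : H (x + y) ≤ H x + H y := by
  have := hH.map_add_sub_map_le (x := 0) le_rfl (Set.mem_Ici.2 (add_nonneg hx hy)) hx hy
  rw [zero_add] at this
  linarith

theorem ConcaveOn.map_sum_le (hH : ConcaveOn 𝕜 (Set.Ici 0) H) (hH0 : H 0 = 0) {ι : Type*}
    (t : Finset ι) {x : ι → 𝕜} (hx : ∀ i ∈ t, 0 ≤ x i) :
    H (∑ i ∈ t, x i) ≤ ∑ i ∈ t, H (x i) :=
  Finset.le_sum_of_subadditive_on_pred H (0 ≤ ·) hH0.le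
    (fun _ _ ↦ hH.map_add_le hH0.ge) (fun _ _ ↦ add_nonneg) x hx

end Concave

section Submodular

variable {α : Type*} [DecidableEq α]

def IsSubmodular (F : Finset α → ℝ) : Prop :=
  ∀ A B : Finset α, A ⊆ B → ∀ a ∉ B, F (insert a A) - F A ≥ F (insert a B) - F B

theorem IsSubmodular.marginal_le_of_subset {F : Finset α → ℝ} (hF : IsSubmodular F)
    (hmono : Monotone F) {A C : Finset α} (hAC : A ⊆ C) (a : α) :
    F (insert a C) - F C ≤ F (insert a A) - F A := by
  by_cases haC : a ∈ C
  · rw [insert_eq_of_mem haC, sub_self, sub_nonneg]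
    exact hmono (subset_insert a A)
  · exact hF A C hAC a haC

theorem IsSubmodular.concaveOn_comp {F : Finset α → ℝ} {H : ℝ → ℝ} (hF : IsSubmodular F)
    (hmono : Monotone F) (hF0 : ∀ S, 0 ≤ F S) (hHmono : MonotoneOn H (Set.Ici 0))
    (hHconc : ConcaveOn ℝ (Set.Ici 0) H) : IsSubmodular (H ∘ F) := by
  intro A C hAC a haC
  have hgain : F (insert a C) - F C ≤ F (insert a A) - F A := hF A C hAC a haC
  have hgain_nonneg : 0 ≤ F (insert a C) - F C := sub_nonneg.2 (hmono (subset_insert a C))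
  calc H (F (insert a C)) - H (F C)
      = H (F C + (F (insert a C) - F C)) - H (F C) := by rw [add_sub_cancel]
    _ ≤ H (F A + (F (insert a C) - F C)) - H (F A) :=
        hHconc.map_add_sub_map_le (hF0 A) (by simpa using hF0 _) (hmono hAC) hgain_nonneg
    _ ≤ H (F A + (F (insert a A) - F A)) - H (F A) := by
        gcongr
        exact hHmono (Set.mem_Ici.2 (add_nonneg (hF0 A) hgain_nonneg)) (by simpa using hF0 _)
          (by linarith)
    _ = H (F (insert a A)) - H (F A) := by rw [add_sub_cancel]

theorem IsSubmodular.sum {ι : Type*} {F : ι → Finset α → ℝ} (t : Finset ι)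
    (hF : ∀ i ∈ t, IsSubmodular (F i)) : IsSubmodular fun S ↦ ∑ i ∈ t, F i S := by
  intro A C hAC a haC
  simp only [ge_iff_le, ← sum_sub_distrib]
  exact sum_le_sum fun i hi ↦ hF i hi A C hAC a haC

end Submodular

section Greedy

variable {α : Type*} [DecidableEq α] {g : Finset α → ℝ}

def IsGreedy (g : Finset α → ℝ) (Sg : ℕ → Finset α) : Prop :=
  ∀ t, ∃ a, Sg (t + 1) = insert a (Sg t) ∧ ∀ b, g (insert b (Sg t)) ≤ g (insert a (Sg t))

theorem IsSubmodular.le_add_sum_marginal (hsub : IsSubmodular g) (hmono : Monotone g)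
    (T D : Finset α) : g (T ∪ D) ≤ g T + ∑ a ∈ D, (g (insert a T) - g T) := by
  induction D using Finset.induction_on with
  | empty => simp
  | insert a D ha ih =>
    rw [union_insert, sum_insert ha]
    have := hsub.marginal_le_of_subset hmono (subset_union_left (s₁ := T) (s₂ := D)) a
    linarith

theorem IsSubmodular.sub_le_card_mul_of_forall_le (hsub : IsSubmodular g) (hmono : Monotone g)
    (S T : Finset α) {a : α} (hmax : ∀ b, g (insert b T) ≤ g (insert a T)) :
    g S - g T ≤ #S * (g (insert a T) - g T) := by
  have hunion : g S ≤ g (T ∪ S) := hmono subset_union_right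
  have hmarg : ∑ b ∈ S, (g (insert b T) - g T) ≤ ∑ _b ∈ S, (g (insert a T) - g T) :=
    sum_le_sum fun b _ ↦ by linarith [hmax b]
  rw [sum_const, nsmul_eq_mul] at hmarg
  linarith [hsub.le_add_sum_marginal hmono T S]

theorem IsGreedy.sub_le_pow_mul {Sg : ℕ → Finset α} (hg : IsGreedy g Sg) (hsub : IsSubmodular g)
    (hmono : Monotone g) {S : Finset α} {B : ℕ} (hS : #S ≤ B) (t : ℕ) :
    g S - g (Sg t) ≤ (1 - 1 / B) ^ t * (g S - g (Sg 0)) := by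
  induction t with
  | zero => simp
  | succ t ih =>
    obtain ⟨a, hnext, hmax⟩ := hg t
    have hgain : 0 ≤ g (insert a (Sg t)) - g (Sg t) := sub_nonneg.2 (hmono (subset_insert _ _))
    have hgap : (g S - g (Sg t)) / B ≤ g (insert a (Sg t)) - g (Sg t) := by
      refine div_le_of_le_mul₀ (Nat.cast_nonneg B) hgain ?_
      calc g S - g (Sg t) ≤ #S * (g (insert a (Sg t)) - g (Sg t)) :=
            hsub.sub_le_card_mul_of_forall_le hmono S (Sg t) hmax
        _ ≤ B * (g (insert a (Sg t)) - g (Sg t)) := by gcongr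
        _ = _ := mul_comm _ _
    have hfactor : 0 ≤ 1 - 1 / (B : ℝ) := sub_nonneg.2 (by simpa using Nat.cast_inv_le_one B)
    calc g S - g (Sg (t + 1)) ≤ (1 - 1 / B) * (g S - g (Sg t)) := by
          rw [hnext]; linarith [show (1 - 1 / (B : ℝ)) * (g S - g (Sg t))
            = g S - g (Sg t) - (g S - g (Sg t)) / B by ring]
      _ ≤ (1 - 1 / B) * ((1 - 1 / B) ^ t * (g S - g (Sg 0))) := by gcongr
      _ = (1 - 1 / B) ^ (t + 1) * (g S - g (Sg 0)) := by ring

theorem IsGreedy.one_sub_exp_neg_one_mul_le {Sg : ℕ → Finset α} (hg : IsGreedy g Sg)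
    (hsub : IsSubmodular g) (hmono : Monotone g) (h0 : Sg 0 = ∅) (hg0 : 0 ≤ g ∅)
    {S : Finset α} {B : ℕ} (hB : 1 ≤ B) (hS : #S ≤ B) :
    (1 - Real.exp (-1)) * g S ≤ g (Sg B) := by
  have hgap := hg.sub_le_pow_mul hsub hmono hS B
  rw [h0] at hgap
  have hpow : (1 - 1 / B : ℝ) ^ B ≤ Real.exp (-1) :=
    Real.one_sub_div_pow_le_exp_neg (by exact_mod_cast hB)
  have hS0 : 0 ≤ g S - g ∅ := sub_nonneg.2 (hmono (empty_subset S))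
  nlinarith [mul_le_mul_of_nonneg_right hpow hS0, mul_nonneg (Real.exp_pos (-1)).le hg0]

end Greedy

theorem stmt_7_general {V : Type*} [DecidableEq V] {k : ℕ}
    (f : Fin k → Finset V → ℝ) (H : ℝ → ℝ) (B : ℕ) (hB : 1 ≤ B)
    (hfnonneg : ∀ i S, 0 ≤ f i S)
    (hfmono : ∀ i, ∀ A B : Finset V, A ⊆ B → f i A ≤ f i B)
    (hfsub : ∀ i, ∀ A B : Finset V, A ⊆ B → ∀ a ∉ B,
      f i (insert a A) - f i A ≥ f i (insert a B) - f i B)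
    (hHmono : MonotoneOn H (Set.Ici (0 : ℝ)))
    (hHconc : ConcaveOn ℝ (Set.Ici (0 : ℝ)) H)
    (hH0 : H 0 = 0)
    -- greedy algorithm on g(S) = ∑ i, H (f i S)
    (Shat : ℕ → Finset V)
    (h0 : Shat 0 = ∅)
    (hstep : ∀ t, ∃ a, Shat (t + 1) = insert a (Shat t) ∧
      ∀ b, (∑ i, H (f i (insert b (Shat t)))) ≤ (∑ i, H (f i (insert a (Shat t)))))
    -- S* optimal for f = ∑ i f i under budget B
    (Sstar : Finset V) (hScard : Sstar.card ≤ B) :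
    (∑ i, H (f i (Shat B))) ≥ (1 - 1 / Real.exp 1) * H (∑ i, f i Sstar) := by
  set g : Finset V → ℝ := fun S ↦ ∑ i, H (f i S)
  have hHnonneg : ∀ z, 0 ≤ z → 0 ≤ H z := fun z hz ↦
    hH0 ▸ hHmono (Set.mem_Ici.2 le_rfl) (Set.mem_Ici.2 hz) hz
  have hgmono : Monotone g := fun A C hAC ↦
    sum_le_sum fun i _ ↦ hHmono (hfnonneg i A) (hfnonneg i C) (hfmono i A C hAC)
  have hgsub : IsSubmodular g := IsSubmodular.sum univ fun i _ ↦
    IsSubmodular.concaveOn_comp (hfsub i) (fun A C ↦ hfmono i A C) (hfnonneg i) hHmono hHconc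
  have hgreedy : (1 - Real.exp (-1)) * g Sstar ≤ g (Shat B) :=
    IsGreedy.one_sub_exp_neg_one_mul_le (g := g) hstep hgsub hgmono h0
      (sum_nonneg fun i _ ↦ hHnonneg _ (hfnonneg i ∅)) hB hScard
  have hsubadd : H (∑ i, f i Sstar) ≤ g Sstar :=
    hHconc.map_sum_le hH0 univ fun i _ ↦ hfnonneg i Sstar
  have hfactor : 0 ≤ 1 - Real.exp (-1) := sub_nonneg.2 (Real.exp_le_one_iff.2 (by norm_num))
  rw [one_div, ← Real.exp_neg]
  exact (mul_le_mul_of_nonneg_left hsubadd hfactor).trans hgreedy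

theorem stmt_7 {V : Type*} [Fintype V] [DecidableEq V] {k : ℕ}
    (f : Fin k → Finset V → ℝ) (H : ℝ → ℝ) (B : ℕ) (hB : 1 ≤ B)
    (hfnonneg : ∀ i S, 0 ≤ f i S)
    (hfmono : ∀ i, ∀ A B : Finset V, A ⊆ B → f i A ≤ f i B)
    (hfsub : ∀ i, ∀ A B : Finset V, A ⊆ B → ∀ a ∉ B,
      f i (insert a A) - f i A ≥ f i (insert a B) - f i B)
    (hfempty : ∀ i, f i ∅ = 0)
    (hHnonneg : ∀ z ∈ Set.Ici (0 : ℝ), 0 ≤ H z)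
    (hHmono : MonotoneOn H (Set.Ici (0 : ℝ)))
    (hHconc : ConcaveOn ℝ (Set.Ici (0 : ℝ)) H)
    (hH0 : H 0 = 0)
    -- greedy algorithm on g(S) = ∑ i, H (f i S)
    (Shat : ℕ → Finset V)
    (h0 : Shat 0 = ∅)
    (hstep : ∀ t, ∃ a, Shat (t + 1) = insert a (Shat t) ∧
      ∀ b, (∑ i, H (f i (insert b (Shat t)))) ≤ (∑ i, H (f i (insert a (Shat t)))))
    -- S* optimal for f = ∑ i f i under budget B
    (Sstar : Finset V) (hScard : Sstar.card ≤ B)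
    (hSopt : ∀ S : Finset V, S.card ≤ B → (∑ i, f i S) ≤ (∑ i, f i Sstar)) :
    (∑ i, H (f i (Shat B))) ≥ (1 - 1 / Real.exp 1) * H (∑ i, f i Sstar) :=
  stmt_7_general f H B hB hfnonneg hfmono hfsub hHmono hHconc hH0 Shat h0 hstep Sstar hScard
end

section
/- (Greedy guarantee for submodular cover) Let g : Finset V → ℤ be a nonnegative integer-valued monotone submodular function with g(∅)=0, and let Q = g(V) (the maximum). Let Ŝ be the output of the greedy algorithm that adds elements of maximal marginal gain until g(Ŝ) = Q. Then |Ŝ| ≤ (1 + ln(max_{a} g({a}))) · |S*| for every S* with g(S*) = Q; in particular |Ŝ| ≤ (1 + ln g(V)) · |S*|. -/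
/-!
Write `d t = Q - g (S t)` for the deficit of the greedy run and `k = |S*|`. Submodularity
spreads the deficit over the `k` elements of `S*`, so the greedy gain is at least `d t / k`:
`d (t+1) ≤ (1 - 1/k) d t ≤ exp (-1/k) d t`. Hence the deficit stays `≥ k` for at most
`k log (Q / k)` steps, and being a positive integer that drops by at least one per step, it
vanishes at most `k` steps later. Finally `Q ≤ k · max_a g {a}` and `max_a g {a} ≤ Q`.
-/

open Finset Real

section Submodular

variable {V : Type*} [DecidableEq V] {g : Finset V → ℤ}

theorem sub_le_sum_marginal (hmono : ∀ A B : Finset V, A ⊆ B → g A ≤ g B)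
    (hsub : ∀ A B : Finset V, A ⊆ B → ∀ a ∉ B,
      g (insert a A) - g A ≥ g (insert a B) - g B)
    (A B : Finset V) :
    g (A ∪ B) - g A ≤ ∑ b ∈ B, (g (insert b A) - g A) := by
  induction B using Finset.induction_on with
  | empty => simp
  | @insert b B hb ih =>
    rw [sum_insert hb, union_insert]
    by_cases hbAB : b ∈ A ∪ B
    · have := hmono A (insert b A) (subset_insert b A)
      rw [insert_eq_of_mem hbAB]
      linarith
    · linarith [hsub A (A ∪ B) subset_union_left b hbAB]

theorem sub_le_card_mul_max_gain (hmono : ∀ A B : Finset V, A ⊆ B → g A ≤ g B)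
    (hsub : ∀ A B : Finset V, A ⊆ B → ∀ a ∉ B,
      g (insert a A) - g A ≥ g (insert a B) - g B)
    {A : Finset V} {a : V} (hmax : ∀ b, g (insert b A) ≤ g (insert a A)) (B : Finset V) :
    g (A ∪ B) - g A ≤ #B * (g (insert a A) - g A) := by
  calc g (A ∪ B) - g A ≤ ∑ b ∈ B, (g (insert b A) - g A) := sub_le_sum_marginal hmono hsub A B
    _ ≤ #B • (g (insert a A) - g A) :=
      sum_le_card_nsmul _ _ _ fun b _ => sub_le_sub_right (hmax b) _
    _ = #B * (g (insert a A) - g A) := nsmul_eq_mul _ _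

theorem le_card_mul_sup'_singleton [Fintype V] [Nonempty V]
    (hmono : ∀ A B : Finset V, A ⊆ B → g A ≤ g B)
    (hsub : ∀ A B : Finset V, A ⊆ B → ∀ a ∉ B,
      g (insert a A) - g A ≥ g (insert a B) - g B)
    (hempty : g ∅ = 0) (B : Finset V) :
    g B ≤ #B * univ.sup' univ_nonempty (fun a : V => g {a}) := by
  calc g B = g (∅ ∪ B) - g ∅ := by rw [empty_union, hempty, sub_zero]
    _ ≤ ∑ b ∈ B, (g (insert b ∅) - g ∅) := sub_le_sum_marginal hmono hsub ∅ B
    _ ≤ #B • univ.sup' univ_nonempty (fun a : V => g {a}) :=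
      sum_le_card_nsmul _ _ _ fun b _ => by
        rw [insert_empty, hempty, sub_zero]
        exact le_sup' (fun a : V => g {a}) (mem_univ b)
    _ = #B * univ.sup' univ_nonempty (fun a : V => g {a}) := nsmul_eq_mul _ _

end Submodular

section Deficit

variable {d : ℕ → ℤ} {k T : ℕ}

theorem sub_le_sub_of_forall_succ_lt (hdrop : ∀ t < T, d (t + 1) < d t) :
    ∀ t ≤ T, (T : ℤ) - t ≤ d t - d T := by
  suffices ∀ m t, t + m = T → (m : ℤ) ≤ d t - d T from fun t ht => by
    simpa [Nat.cast_sub ht] using this (T - t) t (by omega)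
  intro m
  induction m with
  | zero => intro t ht; simp [← ht]
  | succ m ih =>
    intro t ht
    have := ih (t + 1) (by omega)
    have := hdrop t (by omega)
    push_cast
    linarith

theorem le_mul_exp_of_le_mul_sub_succ (hk : 0 < k)
    (hdec : ∀ t < T, d t ≤ k * (d t - d (t + 1))) (hpos : ∀ t < T, 0 < d t) :
    ∀ t ≤ T, (d t : ℝ) ≤ d 0 * exp (-(t / k)) := by
  have hkR : (0 : ℝ) < k := by exact_mod_cast hk
  intro t
  induction t with
  | zero => simp
  | succ t ih =>
    intro ht
    have hstep : (d (t + 1) : ℝ) ≤ (1 - 1 / k) * d t := by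
      have : (k : ℝ) * d (t + 1) ≤ (k - 1) * d t := by
        have := hdec t (by omega)
        have : ((d t : ℤ) : ℝ) ≤ ((k * (d t - d (t + 1)) : ℤ) : ℝ) := by exact_mod_cast this
        push_cast at this
        linarith
      rw [one_sub_div hkR.ne', div_mul_eq_mul_div, le_div_iff₀ hkR]
      linarith
    have hexp : 1 - 1 / (k : ℝ) ≤ exp (-(1 / k)) := by linarith [add_one_le_exp (-(1 / k : ℝ))]
    have hdt : (0 : ℝ) ≤ d t := by exact_mod_cast (hpos t (by omega)).le
    calc (d (t + 1) : ℝ) ≤ (1 - 1 / k) * d t := hstep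
      _ ≤ exp (-(1 / k)) * (d 0 * exp (-(t / k))) :=
        mul_le_mul hexp (ih (by omega)) hdt (exp_pos _).le
      _ = d 0 * exp (-((t + 1 : ℕ) / k)) := by
        rw [mul_left_comm, ← exp_add]
        push_cast
        ring_nf

theorem le_mul_log_of_le_apply (hk : 0 < k)
    (hdec : ∀ t < T, d t ≤ k * (d t - d (t + 1))) (hpos : ∀ t < T, 0 < d t)
    {B : ℤ} (hB : d 0 ≤ k * B) {t : ℕ} (ht : t ≤ T) (hkt : k ≤ d t) :
    (t : ℝ) ≤ k * log B := by
  have hkR : (0 : ℝ) < k := by exact_mod_cast hk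
  have hkB : (k : ℝ) ≤ k * B * exp (-(t / k)) := by
    have h1 : (k : ℝ) ≤ d t := by exact_mod_cast hkt
    have h2 : (d 0 : ℝ) ≤ k * B := by exact_mod_cast hB
    nlinarith [le_mul_exp_of_le_mul_sub_succ hk hdec hpos t ht, exp_pos (-(t / k : ℝ))]
  have hexp : exp (t / k) ≤ B := by
    rw [mul_assoc, le_mul_iff_one_le_right hkR, exp_neg, ← div_eq_mul_inv,
      one_le_div (exp_pos _)] at hkB
    exact hkB
  rw [← div_le_iff₀' hkR, le_log_iff_exp_le ((exp_pos _).trans_le hexp)]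
  exact hexp

theorem le_mul_one_add_log_of_le_mul_sub_succ
    (hdec : ∀ t < T, d t ≤ k * (d t - d (t + 1))) (hpos : ∀ t < T, 0 < d t)
    (hdT : d T = 0) {B : ℤ} (hB : d 0 ≤ k * B) :
    (T : ℝ) ≤ k * (1 + log B) := by
  have hlogB := log_intCast_nonneg B
  rcases Nat.eq_zero_or_pos T with rfl | hT
  · simp only [CharP.cast_eq_zero]
    positivity
  have hk : 0 < k := by
    by_contra! hk
    have h := hdec 0 hT
    simp only [nonpos_iff_eq_zero.1 hk, CharP.cast_eq_zero, zero_mul] at h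
    linarith [hpos 0 hT]
  have hex : ∃ t, d t < k := ⟨T, by rw [hdT]; exact_mod_cast hk⟩
  have hfindT : Nat.find hex ≤ T := Nat.find_min' hex (by rw [hdT]; exact_mod_cast hk)
  have hdrop : ∀ t < T, d (t + 1) < d t := fun t ht => by
    by_contra! h
    nlinarith [hdec t ht, hpos t ht]
  -- once the deficit is below `k`, fewer than `k` unit steps remain
  have htail : T < Nat.find hex + k := by
    have := sub_le_sub_of_forall_succ_lt hdrop (Nat.find hex) hfindT
    have := Nat.find_spec hex
    omega
  rcases hfind : Nat.find hex with _ | t₀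
  · rw [hfind] at htail
    have : (T : ℝ) ≤ k := by exact_mod_cast (by omega : T ≤ k)
    nlinarith
  · have ht₀ : (t₀ : ℝ) ≤ k * log B :=
      le_mul_log_of_le_apply hk hdec hpos hB (by omega)
        (not_lt.1 (Nat.find_min hex (by omega)))
    have : (T : ℝ) ≤ t₀ + k := by exact_mod_cast (by omega : T ≤ t₀ + k)
    linarith

end Deficit

theorem card_eq_of_insert_notMem {V : Type*} [DecidableEq V] {S : ℕ → Finset V} {T : ℕ}
    (h0 : S 0 = ∅) (hstep : ∀ t < T, ∃ a, a ∉ S t ∧ S (t + 1) = insert a (S t)) :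
    ∀ t ≤ T, #(S t) = t := by
  intro t
  induction t with
  | zero => simp [h0]
  | succ t ih =>
    intro ht
    obtain ⟨a, ha, hS⟩ := hstep t (by omega)
    rw [hS, card_insert_of_notMem ha, ih (by omega)]

theorem stmt_8_general {V : Type*} [Fintype V] [DecidableEq V] [Nonempty V]
    (g : Finset V → ℤ)
    (hmono : ∀ A B : Finset V, A ⊆ B → g A ≤ g B)
    (hsub : ∀ A B : Finset V, A ⊆ B → ∀ a ∉ B,
      g (insert a A) - g A ≥ g (insert a B) - g B)
    (hempty : g ∅ = 0)
    -- greedy run: S 0 = ∅, at each step t < T an argmax element is added,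
    -- and the run stops exactly when the maximum value Q = g(univ) is reached
    (S : ℕ → Finset V) (T : ℕ)
    (h0 : S 0 = ∅)
    (hstep : ∀ t < T, g (S t) < g Finset.univ ∧
      ∃ a, a ∉ S t ∧ S (t + 1) = insert a (S t) ∧
        ∀ b, g (insert b (S t)) ≤ g (insert a (S t)))
    (hT : g (S T) = g Finset.univ) :
    ∀ Sstar : Finset V, g Sstar = g Finset.univ →
      ((S T).card : ℝ) ≤
        (1 + Real.log ((Finset.univ.sup' Finset.univ_nonempty
          (fun a : V => g {a}) : ℤ) : ℝ)) * Sstar.card ∧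
      ((S T).card : ℝ) ≤ (1 + Real.log ((g Finset.univ : ℤ) : ℝ)) * Sstar.card := by
  intro Sstar hstar
  have hcard : #(S T) = T := card_eq_of_insert_notMem h0
    (fun t ht => (hstep t ht).2.imp fun _ h => ⟨h.1, h.2.1⟩) T le_rfl
  have hdec : ∀ t < T, g univ - g (S t) ≤
      #Sstar * ((g univ - g (S t)) - (g univ - g (S (t + 1)))) := by
    intro t ht
    obtain ⟨-, a, -, hS, hmax⟩ := hstep t ht
    have := hmono Sstar (S t ∪ Sstar) subset_union_right
    have := sub_le_card_mul_max_gain hmono hsub hmax Sstar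
    rw [hS]
    linarith
  have hbound (B : ℤ) (hB : g univ ≤ #Sstar * B) : (T : ℝ) ≤ #Sstar * (1 + log B) :=
    le_mul_one_add_log_of_le_mul_sub_succ (d := fun t => g univ - g (S t)) hdec
      (fun t ht => sub_pos.2 (hstep t ht).1) (sub_eq_zero.2 hT.symm)
      (by simpa [h0, hempty] using hB)
  have hM : g univ ≤ #Sstar * univ.sup' univ_nonempty (fun a : V => g {a}) :=
    hstar ▸ le_card_mul_sup'_singleton hmono hsub hempty Sstar
  have hMQ : univ.sup' univ_nonempty (fun a : V => g {a}) ≤ g univ :=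
    sup'_le _ _ fun a _ => hmono _ _ (subset_univ _)
  rw [hcard, mul_comm _ (#Sstar : ℝ), mul_comm _ (#Sstar : ℝ)]
  exact ⟨hbound _ hM, hbound _ (hM.trans (by gcongr))⟩

theorem stmt_8 {V : Type*} [Fintype V] [DecidableEq V] [Nonempty V]
    (g : Finset V → ℤ)
    (hnonneg : ∀ S, 0 ≤ g S)
    (hmono : ∀ A B : Finset V, A ⊆ B → g A ≤ g B)
    (hsub : ∀ A B : Finset V, A ⊆ B → ∀ a ∉ B,
      g (insert a A) - g A ≥ g (insert a B) - g B)
    (hempty : g ∅ = 0)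
    -- greedy run: S 0 = ∅, at each step t < T an argmax element is added,
    -- and the run stops exactly when the maximum value Q = g(univ) is reached
    (S : ℕ → Finset V) (T : ℕ)
    (h0 : S 0 = ∅)
    (hstep : ∀ t < T, g (S t) < g Finset.univ ∧
      ∃ a, a ∉ S t ∧ S (t + 1) = insert a (S t) ∧
        ∀ b, g (insert b (S t)) ≤ g (insert a (S t)))
    (hT : g (S T) = g Finset.univ) :
    ∀ Sstar : Finset V, g Sstar = g Finset.univ →
      ((S T).card : ℝ) ≤
        (1 + Real.log ((Finset.univ.sup' Finset.univ_nonempty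
          (fun a : V => g {a}) : ℤ) : ℝ)) * Sstar.card ∧
      ((S T).card : ℝ) ≤ (1 + Real.log ((g Finset.univ : ℤ) : ℝ)) * Sstar.card :=
  stmt_8_general g hmono hsub hempty S T h0 hstep hT
end

section
/- (Expectation of monotone submodular functions) Let Ω be a finite probability space and for each ω ∈ Ω let f_ω : Finset V → ℝ be monotone and submodular. Then the expected function F(S) = ∑_ω p(ω)·f_ω(S), with p(ω) ≥ 0, is monotone and submodular. In particular, the time-critical influence function, defined as an expectation over random edge-realizations (live-edge graphs) of the number of nodes reachable from S within τ steps, is monotone submodular. -/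
theorem stmt_15 {V : Type*} [Fintype V] [DecidableEq V]
    {Ω : Type*} [Fintype Ω]
    (p : Ω → ℝ) (hp : ∀ ω, 0 ≤ p ω)
    (f : Ω → Finset V → ℝ)
    (hmono : ∀ ω, ∀ A B : Finset V, A ⊆ B → f ω A ≤ f ω B)
    (hsub : ∀ ω, ∀ A B : Finset V, A ⊆ B → ∀ a ∉ B,
      f ω (insert a A) - f ω A ≥ f ω (insert a B) - f ω B) :
    (∀ A B : Finset V, A ⊆ B → (∑ ω, p ω * f ω A) ≤ (∑ ω, p ω * f ω B)) ∧
    (∀ A B : Finset V, A ⊆ B → ∀ a ∉ B,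
      (∑ ω, p ω * f ω (insert a A)) - (∑ ω, p ω * f ω A) ≥
        (∑ ω, p ω * f ω (insert a B)) - (∑ ω, p ω * f ω B)) := by
  constructor
  · intro A B hAB
    exact Finset.sum_le_sum fun ω _ =>
      mul_le_mul_of_nonneg_left (hmono ω A B hAB) (hp ω)
  · intro A B hAB a ha
    rw [← Finset.sum_sub_distrib, ← Finset.sum_sub_distrib]
    apply Finset.sum_le_sum
    intro ω _
    rw [← mul_sub, ← mul_sub]
    exact mul_le_mul_of_nonneg_left (hsub ω A B hAB a ha) (hp ω)
end
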